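/- Let μ be a probability distribution on a finite set S maximizing entropy subject to linear constraints A μ = b (where A is an m×|S| matrix). If a maximizer with full support exists, then there exists θ ∈ ℝ^m such that μ(s) = exp(⟨A_s, θ⟩ - F(θ)) for all s, where A_s is the s-th column of A and F(θ) = log ∑_s exp(⟨A_s, θ⟩) is the log-partition function. -/

import Mathlib

/-!
Moving μ along a direction `v` with `A v = 0` and `∑ v = 0` keeps it feasible for small `t`,
because μ has full support; so the entropy of `μ + t v` has a local maximum at `t = 0`, where its
derivative is `-∑ v (log μ + 1) = -∑ v log μ`. Thus `log μ` is orthogonal to the kernel of `A`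
augmented by a row of ones, i.e. it lies in that matrix's row space: `log μ = Aᵀθ + c`.
Normalization of μ then forces `c = -F(θ)`.
-/

open Finset Matrix Filter Topology Real

theorem Matrix.exists_vecMul_eq_of_forall_mulVec_eq_zero {K ι n : Type*} [Field K] [Fintype ι]
    [Fintype n] (A : Matrix ι n K) (g : n → K)
    (h : ∀ v, A *ᵥ v = 0 → g ⬝ᵥ v = 0) : ∃ θ, θ ᵥ* A = g := by
  classical
  have hg : dotProductEquiv K n g ∈ (LinearMap.ker A.mulVecLin).dualAnnihilator :=
    (Submodule.mem_dualAnnihilator _).2 fun v hv => by simpa using h v hv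
  obtain ⟨ψ, hψ⟩ := (A.mulVecLin.range_dualMap_eq_dualAnnihilator_ker).ge hg
  obtain ⟨θ, rfl⟩ := (dotProductEquiv K ι).surjective ψ
  refine ⟨θ, (dotProductEquiv K n).injective (LinearMap.ext fun v => ?_)⟩
  rw [← hψ]
  simp [dotProduct_mulVec]

theorem Matrix.exists_eq_vecMul_add_const_of_forall_mulVec_eq_zero {K ι n : Type*} [Field K]
    [Fintype ι] [Fintype n] (A : Matrix ι n K) (g : n → K)
    (h : ∀ v, A *ᵥ v = 0 → ∑ s, v s = 0 → g ⬝ᵥ v = 0) :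
    ∃ (θ : ι → K) (c : K), ∀ s, g s = (θ ᵥ* A) s + c := by
  obtain ⟨θ, hθ⟩ :=
    (fromRows A (of fun (_ : Unit) _ => 1)).exists_vecMul_eq_of_forall_mulVec_eq_zero g
      fun v hv => by
        rw [fromRows_mulVec] at hv
        refine h v (funext fun i => congrFun hv (.inl i)) ?_
        simpa [mulVec, dotProduct] using congrFun hv (.inr ())
  refine ⟨θ ∘ Sum.inl, θ (Sum.inr ()), fun s => ?_⟩
  rw [← hθ]
  simp [vecMul, dotProduct]

theorem hasDerivAt_entropy_add_mul {S : Type*} [Fintype S] {μ : S → ℝ} (hμ : ∀ s, μ s ≠ 0)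
    (v : S → ℝ) :
    HasDerivAt (fun t : ℝ => -∑ s, (μ s + t * v s) * log (μ s + t * v s))
      (-∑ s, v s * (log (μ s) + 1)) 0 := by
  have hline (s : S) : HasDerivAt (fun t : ℝ => μ s + t * v s) (v s) 0 := by
    simpa using ((hasDerivAt_id (0 : ℝ)).mul_const (v s)).const_add (μ s)
  have hentropy : (fun t : ℝ => -∑ s, (μ s + t * v s) * log (μ s + t * v s)) =
      fun t => ∑ s, negMulLog (μ s + t * v s) := by
    ext t
    simp [negMulLog_eq_neg]
  rw [hentropy]
  have hsum := HasDerivAt.fun_sum (u := univ) fun s _ =>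
    (hasDerivAt_negMulLog (by simpa using hμ s)).comp (0 : ℝ) (hline s)
  simp only [Function.comp_def, zero_mul, add_zero] at hsum
  refine hsum.congr_deriv ?_
  rw [← sum_neg_distrib]
  exact sum_congr rfl fun s _ => by ring

theorem log_dotProduct_eq_zero_of_isLocalMax_entropy {S : Type*} [Fintype S] {μ v : S → ℝ}
    (hμ : ∀ s, μ s ≠ 0) (hv : ∑ s, v s = 0)
    (hmax : IsLocalMax (fun t : ℝ => -∑ s, (μ s + t * v s) * log (μ s + t * v s)) 0) :
    (fun s => log (μ s)) ⬝ᵥ v = 0 := by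
  simpa [mul_add, sum_add_distrib, hv, dotProduct, mul_comm] using
    hmax.hasDerivAt_eq_zero (hasDerivAt_entropy_add_mul hμ v)

theorem eq_exp_sub_log_sum_exp {S : Type*} [Fintype S] {μ a : S → ℝ} {c : ℝ}
    (hμ : ∀ s, μ s = exp (a s + c)) (hμ1 : ∑ s, μ s = 1) (s : S) :
    μ s = exp (a s - log (∑ s', exp (a s'))) := by
  have hZ : ∑ s', exp (a s') = exp (-c) := by
    rw [exp_neg]
    refine eq_inv_of_mul_eq_one_left ?_
    rw [sum_mul, ← hμ1]
    exact sum_congr rfl fun s _ => by rw [hμ, exp_add]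
  rw [hZ, log_exp, sub_neg_eq_add, hμ]

theorem eventually_forall_pos_add_mul {S : Type*} [Finite S] {μ : S → ℝ} (hμ : ∀ s, 0 < μ s)
    (v : S → ℝ) : ∀ᶠ t in 𝓝 (0 : ℝ), ∀ s, 0 < μ s + t * v s :=
  eventually_all.2 fun s => Tendsto.eventually_const_lt (by simpa using hμ s)
    ((continuous_const.add (continuous_id.mul continuous_const)).tendsto' 0 _ rfl)

theorem maxent_exponential_family_general
    {S : Type*} [Fintype S] {m : ℕ}
    (A : Matrix (Fin m) S ℝ) (b : Fin m → ℝ)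
    (μ : S → ℝ)
    (hμ0 : ∀ s, 0 < μ s) (hμ1 : ∑ s, μ s = 1)
    (hμA : A.mulVec μ = b)
    (hmax : ∀ ν : S → ℝ, (∀ s, 0 ≤ ν s) → ∑ s, ν s = 1 → A.mulVec ν = b →
      -∑ s, ν s * Real.log (ν s) ≤ -∑ s, μ s * Real.log (μ s)) :
    ∃ θ : Fin m → ℝ,
      ∀ s, μ s = Real.exp ((∑ i, A i s * θ i) -
        Real.log (∑ s', Real.exp (∑ i, A i s' * θ i))) := by
  have hcrit (v : S → ℝ) (hAv : A *ᵥ v = 0) (hv : ∑ s, v s = 0) :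
      (fun s => log (μ s)) ⬝ᵥ v = 0 := by
    refine log_dotProduct_eq_zero_of_isLocalMax_entropy (fun s => (hμ0 s).ne') hv ?_
    filter_upwards [eventually_forall_pos_add_mul hμ0 v] with t ht
    have hA : A *ᵥ (fun s => μ s + t * v s) = b := by
      rw [show (fun s => μ s + t * v s) = μ + t • v from rfl, mulVec_add, mulVec_smul, hAv,
        hμA, smul_zero, add_zero]
    simpa using hmax _ (fun s => (ht s).le) (by simp [sum_add_distrib, ← mul_sum, hμ1, hv]) hA
  obtain ⟨θ, c, hθ⟩ := A.exists_eq_vecMul_add_const_of_forall_mulVec_eq_zero _ hcrit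
  refine ⟨θ, eq_exp_sub_log_sum_exp (c := c) (fun s => ?_) hμ1⟩
  rw [← exp_log (hμ0 s), hθ s]
  simp [vecMul, dotProduct, mul_comm]

/-- A full-support maximum-entropy distribution subject to linear
constraints `A μ = b` has exponential-family form. -/
theorem maxent_exponential_family
    {S : Type*} [Fintype S] [Nonempty S] {m : ℕ}
    (A : Matrix (Fin m) S ℝ) (b : Fin m → ℝ)
    (μ : S → ℝ)
    (hμ0 : ∀ s, 0 < μ s) (hμ1 : ∑ s, μ s = 1)
    (hμA : A.mulVec μ = b)
    (hmax : ∀ ν : S → ℝ, (∀ s, 0 ≤ ν s) → ∑ s, ν s = 1 → A.mulVec ν = b →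
      -∑ s, ν s * Real.log (ν s) ≤ -∑ s, μ s * Real.log (μ s)) :
    ∃ θ : Fin m → ℝ,
      ∀ s, μ s = Real.exp ((∑ i, A i s * θ i) -
        Real.log (∑ s', Real.exp (∑ i, A i s' * θ i))) :=
  maxent_exponential_family_general A b μ hμ0 hμ1 hμA hmax
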